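/- arXiv:2411.04352 — 2 statements merged into one kernel-verified Lean document; each statement's English description precedes it below -/
import Mathlib

section
/- Under the angular shift ω = θ + λ(s) with λ(s) = ∫₀ˢ τ(s')ℓ'(s') ds' (the Mercier coordinate), the induced metric in coordinates (ρ,ω,s) becomes diagonal: g = diag(1, ρ², h_s(ρ, ω−λ, s)²). -/
/- STATEMENT 1: In Mercier coordinates ω = θ + λ(s), λ(s) = ∫₀ˢ τ ℓ' ds', with
T = τ - λ'/ℓ', the near-axis metric becomes diagonal:
g = diag(1, ρ², h_s(ρ, ω-λ, s)²) where h_s = ℓ'(1 - κρ cos(ω-λ)). -/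
theorem stmt1 (lp κv ρ ω s : ℝ) (hlp : lp ≠ 0) (τf : ℝ → ℝ) (hτ : Continuous τf)
    (lam : ℝ → ℝ) (hlam : ∀ u : ℝ, lam u = ∫ v in (0:ℝ)..u, τf v * lp) :
    (!![1, 0, 0;
       0, ρ ^ 2, lp * (τf s - deriv lam s / lp) * ρ ^ 2;
       0, lp * (τf s - deriv lam s / lp) * ρ ^ 2,
         lp ^ 2 * (τf s - deriv lam s / lp) ^ 2 * ρ ^ 2
           + (lp * (1 - κv * ρ * Real.cos (ω - lam s))) ^ 2] : Matrix (Fin 3) (Fin 3) ℝ)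
      = Matrix.diagonal ![1, ρ ^ 2, (lp * (1 - κv * ρ * Real.cos (ω - lam s))) ^ 2] := by
  have hfun : lam = fun u => ∫ v in (0:ℝ)..u, τf v * lp := funext hlam
  have hderiv : deriv lam s = τf s * lp := by
    rw [hfun]
    exact Continuous.deriv_integral (fun v => τf v * lp) (by continuity) 0 s
  have hT : τf s - deriv lam s / lp = 0 := by
    rw [hderiv]; field_simp; ring
  rw [hT]
  ext i j
  fin_cases i <;> fin_cases j <;>
    simp [Matrix.diagonal, Matrix.vecHead, Matrix.vecTail]
end

section
/- The operator L_m = m² + ∂²/∂θ² acting on 2π-periodic functions of θ has null space spanned by e^{imθ} and e^{-imθ} (for m ≥ 1), and the Fredholm compatibility condition ⟨m(m−1)φ_{m−1}cosθ + ∂_θ(cosθ ∂_θ φ_{m−1}), e^{±imθ}⟩ = 0 holds automatically for any function φ_{m−1}(θ) of the form Σ_{n=0}^{m−1} c_n e^{(2n−m+1)iθ}. -/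
open Complex

/-- The analytic-form coefficient function φ_{m-1}(θ) = Σ_{n=0}^{m-1} c_n e^{(2n-m+1)iθ}. -/
noncomputable def phiCoeff (m : ℕ) (c : ℕ → ℂ) (θ : ℝ) : ℂ :=
  ∑ n ∈ Finset.range m, c n * Complex.exp (((2 * (n : ℤ) - (m : ℤ) + 1 : ℤ) : ℂ) * Complex.I * θ)


lemma hasDerivAt_cexp_mul (w : ℂ) (θ : ℝ) :
    HasDerivAt (fun x:ℝ => Complex.exp (w * x)) (w * Complex.exp (w * θ)) θ := by
  have h : HasDerivAt (fun x:ℝ => w * (x:ℂ)) w θ := by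
    simpa using (Complex.ofRealCLM.hasDerivAt (x := θ)).const_mul w
  simpa [mul_comm] using h.cexp

lemma cos_as_exp (θ : ℝ) : ((Real.cos θ : ℝ):ℂ)
    = (Complex.exp ((θ:ℂ) * Complex.I) + Complex.exp (-(θ:ℂ) * Complex.I))/2 := by
  rw [Complex.ofReal_cos]; rfl

lemma sin_as_exp (θ : ℝ) : ((Real.sin θ : ℝ):ℂ)
    = (Complex.exp (-(θ:ℂ) * Complex.I) - Complex.exp ((θ:ℂ) * Complex.I)) * Complex.I / 2 := by
  rw [Complex.ofReal_sin]; rfl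

lemma phi_hasDerivAt (m : ℕ) (c : ℕ → ℂ) (θ : ℝ) :
    HasDerivAt (phiCoeff m c)
      (∑ n ∈ Finset.range m, c n * ((((2 * (n : ℤ) - (m : ℤ) + 1 : ℤ) : ℂ) * Complex.I) * Complex.exp (((2 * (n : ℤ) - (m : ℤ) + 1 : ℤ) : ℂ) * Complex.I * θ))) θ := by
  unfold phiCoeff
  exact HasDerivAt.fun_sum fun n _ =>
    (hasDerivAt_cexp_mul (((2 * (n : ℤ) - (m : ℤ) + 1 : ℤ) : ℂ) * Complex.I) θ).const_mul (c n)

lemma integrand_eq (m : ℕ) (c : ℕ → ℂ) (ε : ℤ) (θ : ℝ) :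
    ((m : ℂ) * ((m : ℂ) - 1) * phiCoeff m c θ * (Real.cos θ : ℂ)
        + deriv (fun x : ℝ => (Real.cos x : ℂ) * deriv (phiCoeff m c) x) θ)
      * (starRingEnd ℂ) (Complex.exp ((ε : ℂ) * Complex.I * θ))
    = ∑ n ∈ Finset.range m,
        c n * ((((m:ℂ) * ((m:ℂ) - 1) - ((2 * (n : ℤ) - (m : ℤ) + 1 : ℤ) : ℂ) * (((2 * (n : ℤ) - (m : ℤ) + 1 : ℤ) : ℂ) + 1)) / 2) * Complex.exp (((2 * (n : ℤ) - (m : ℤ) + 1 + 1 - ε : ℤ) : ℂ) * Complex.I * θ) + (((m:ℂ) * ((m:ℂ) - 1) - ((2 * (n : ℤ) - (m : ℤ) + 1 : ℤ) : ℂ) * (((2 * (n : ℤ) - (m : ℤ) + 1 : ℤ) : ℂ) - 1)) / 2) * Complex.exp (((2 * (n : ℤ) - (m : ℤ) + 1 - 1 - ε : ℤ) : ℂ) * Complex.I * θ)) := by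
  have hd1 : deriv (phiCoeff m c)
      = fun t : ℝ => ∑ n ∈ Finset.range m, c n * ((((2 * (n : ℤ) - (m : ℤ) + 1 : ℤ) : ℂ) * Complex.I)
          * Complex.exp (((2 * (n : ℤ) - (m : ℤ) + 1 : ℤ) : ℂ) * Complex.I * t)) :=
    funext fun t => (phi_hasDerivAt m c t).deriv
  simp only [hd1]
  have h2 : HasDerivAt (fun x : ℝ => ((Real.cos x : ℝ):ℂ)
        * ∑ n ∈ Finset.range m, c n * ((((2 * (n : ℤ) - (m : ℤ) + 1 : ℤ) : ℂ) * Complex.I) * Complex.exp (((2 * (n : ℤ) - (m : ℤ) + 1 : ℤ) : ℂ) * Complex.I * x)))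
      (((-Real.sin θ : ℝ):ℂ) * (∑ n ∈ Finset.range m, c n * ((((2 * (n : ℤ) - (m : ℤ) + 1 : ℤ) : ℂ) * Complex.I) * Complex.exp (((2 * (n : ℤ) - (m : ℤ) + 1 : ℤ) : ℂ) * Complex.I * θ)))
        + ((Real.cos θ : ℝ):ℂ) * ∑ n ∈ Finset.range m,
            c n * ((((2 * (n : ℤ) - (m : ℤ) + 1 : ℤ) : ℂ) * Complex.I) * ((((2 * (n : ℤ) - (m : ℤ) + 1 : ℤ) : ℂ) * Complex.I) * Complex.exp (((2 * (n : ℤ) - (m : ℤ) + 1 : ℤ) : ℂ) * Complex.I * θ)))) θ :=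
    ((Real.hasDerivAt_cos θ).ofReal_comp).mul (HasDerivAt.fun_sum fun n _ =>
      ((hasDerivAt_cexp_mul (((2 * (n : ℤ) - (m : ℤ) + 1 : ℤ) : ℂ) * Complex.I) θ).const_mul (((2 * (n : ℤ) - (m : ℤ) + 1 : ℤ) : ℂ) * Complex.I)).const_mul (c n))
  rw [h2.deriv]
  have hconj : (starRingEnd ℂ) (Complex.exp ((ε : ℂ) * Complex.I * θ)) = Complex.exp (-((ε:ℂ) * Complex.I * θ)) := by
    rw [← Complex.exp_conj]
    congr 1
    simp [map_mul, Complex.conj_I, Complex.conj_ofReal]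
  rw [hconj, Complex.ofReal_neg, sin_as_exp, cos_as_exp]
  unfold phiCoeff
  simp only [Finset.mul_sum, Finset.sum_mul, add_mul, ← Finset.sum_add_distrib]
  refine Finset.sum_congr rfl fun n hn => ?_
  have he1 : Complex.exp (((2 * (n : ℤ) - (m : ℤ) + 1 + 1 - ε : ℤ) : ℂ) * Complex.I * θ) = Complex.exp (((2 * (n : ℤ) - (m : ℤ) + 1 : ℤ) : ℂ) * Complex.I * θ) * Complex.exp ((θ:ℂ) * Complex.I) * Complex.exp (-((ε:ℂ) * Complex.I * θ)) := by
    rw [← Complex.exp_add, ← Complex.exp_add]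
    congr 1
    push_cast
    ring
  have he2 : Complex.exp (((2 * (n : ℤ) - (m : ℤ) + 1 - 1 - ε : ℤ) : ℂ) * Complex.I * θ) = Complex.exp (((2 * (n : ℤ) - (m : ℤ) + 1 : ℤ) : ℂ) * Complex.I * θ) * Complex.exp (-(θ:ℂ) * Complex.I) * Complex.exp (-((ε:ℂ) * Complex.I * θ)) := by
    rw [← Complex.exp_add, ← Complex.exp_add]
    congr 1
    push_cast
    ring
  linear_combination (- c n * (((m:ℂ) * ((m:ℂ) - 1) - ((2 * (n : ℤ) - (m : ℤ) + 1 : ℤ) : ℂ) * (((2 * (n : ℤ) - (m : ℤ) + 1 : ℤ) : ℂ) + 1)) / 2)) * he1 + (- c n * (((m:ℂ) * ((m:ℂ) - 1) - ((2 * (n : ℤ) - (m : ℤ) + 1 : ℤ) : ℂ) * (((2 * (n : ℤ) - (m : ℤ) + 1 : ℤ) : ℂ) - 1)) / 2)) * he2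
    + (c n * Complex.exp (((2 * (n : ℤ) - (m : ℤ) + 1 : ℤ) : ℂ) * Complex.I * θ) * Complex.exp (-((ε:ℂ) * Complex.I * θ)) * (((2 * (n : ℤ) - (m : ℤ) + 1 : ℤ) : ℂ) * (Complex.exp ((θ:ℂ) * Complex.I) - Complex.exp (-(θ:ℂ) * Complex.I)) + ((2 * (n : ℤ) - (m : ℤ) + 1 : ℤ) : ℂ)^2 * (Complex.exp ((θ:ℂ) * Complex.I) + Complex.exp (-(θ:ℂ) * Complex.I))) / 2) * Complex.I_sq

lemma expInt_integral (ℓ : ℤ) :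
    (∫ θ in (0:ℝ)..(2*Real.pi), Complex.exp ((ℓ:ℂ) * Complex.I * θ)) =
      if ℓ = 0 then (2*Real.pi : ℂ) else 0 := by
  rcases eq_or_ne ℓ 0 with h | h
  · simp [h]
  · rw [if_neg h]
    have hc : (ℓ:ℂ) * Complex.I ≠ 0 := by
      simp [Complex.I_ne_zero, h]
    rw [integral_exp_mul_complex hc]
    have h1 : (ℓ:ℂ) * Complex.I * (2*Real.pi:ℝ) = (ℓ:ℂ) * (2 * Real.pi * Complex.I) := by
      push_cast; ring
    rw [h1, Complex.exp_int_mul_two_pi_mul_I]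
    simp

/- STATEMENT 2: The operator L_m = m² + ∂²/∂θ² on 2π-periodic functions has null space
spanned by e^{imθ}, e^{-imθ} (m ≥ 1), and the Fredholm compatibility condition
⟨m(m-1)φ_{m-1} cosθ + ∂_θ(cosθ ∂_θ φ_{m-1}), e^{±imθ}⟩ = 0 holds automatically for
φ_{m-1}(θ) = Σ_{n=0}^{m-1} c_n e^{(2n-m+1)iθ}. -/
theorem stmt2 (m : ℕ) (hm : 1 ≤ m) :
    -- null space of L_m is spanned by e^{imθ} and e^{-imθ}:
    ((∀ (f f' f'' : ℝ → ℂ), (∀ θ, HasDerivAt f (f' θ) θ) → (∀ θ, HasDerivAt f' (f'' θ) θ) →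
      (∀ θ, (m : ℂ) ^ 2 * f θ + f'' θ = 0) →
      ∃ a b : ℂ, ∀ θ : ℝ,
        f θ = a * Complex.exp ((m : ℂ) * Complex.I * θ)
            + b * Complex.exp (-(m : ℂ) * Complex.I * θ)) ∧
     (∀ a b : ℂ, ∀ θ : ℝ,
        (m : ℂ) ^ 2 * (a * Complex.exp ((m : ℂ) * Complex.I * θ)
                      + b * Complex.exp (-(m : ℂ) * Complex.I * θ))
          + deriv (deriv (fun x : ℝ => a * Complex.exp ((m : ℂ) * Complex.I * x)
                      + b * Complex.exp (-(m : ℂ) * Complex.I * x))) θ = 0)) ∧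
    -- Fredholm compatibility condition:
    (∀ (c : ℕ → ℂ) (ε : ℤ), (ε = (m : ℤ) ∨ ε = -(m : ℤ)) →
      (∫ θ in (0 : ℝ)..(2 * Real.pi),
        ((m : ℂ) * ((m : ℂ) - 1) * phiCoeff m c θ * (Real.cos θ : ℂ)
            + deriv (fun x : ℝ => (Real.cos x : ℂ) * deriv (phiCoeff m c) x) θ)
          * (starRingEnd ℂ) (Complex.exp ((ε : ℂ) * Complex.I * θ))) = 0) := by
  refine ⟨⟨?_, ?_⟩, ?_⟩
  · intro f f' f'' hf hf' heq

    have hu : ∀ x : ℝ, HasDerivAt (fun x : ℝ => Complex.exp (-(m:ℂ) * Complex.I * x) * (f' x + ((m:ℂ) * Complex.I) * f x)) 0 x := by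
      intro x
      have h := (hasDerivAt_cexp_mul (-(m:ℂ) * Complex.I) x).mul ((hf' x).add ((hf x).const_mul ((m:ℂ) * Complex.I)))
      have hV : -(m:ℂ) * Complex.I * Complex.exp (-(m:ℂ) * Complex.I * x) * (f' x + ((m:ℂ) * Complex.I) * f x)
          + Complex.exp (-(m:ℂ) * Complex.I * x) * (f'' x + ((m:ℂ) * Complex.I) * f' x) = 0 := by
        linear_combination Complex.exp (-(m:ℂ) * Complex.I * x) * heq x
          - (m:ℂ)^2 * Complex.exp (-(m:ℂ) * Complex.I * x) * f x * Complex.I_sq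
      simp only [Pi.add_apply] at h
      rw [hV] at h
      exact h
    have hv : ∀ x : ℝ, HasDerivAt (fun x : ℝ => Complex.exp ((m:ℂ) * Complex.I * x) * (f' x - ((m:ℂ) * Complex.I) * f x)) 0 x := by
      intro x
      have h := (hasDerivAt_cexp_mul ((m:ℂ) * Complex.I) x).mul ((hf' x).sub ((hf x).const_mul ((m:ℂ) * Complex.I)))
      have hV : (m:ℂ) * Complex.I * Complex.exp ((m:ℂ) * Complex.I * x) * (f' x - ((m:ℂ) * Complex.I) * f x)
          + Complex.exp ((m:ℂ) * Complex.I * x) * (f'' x - ((m:ℂ) * Complex.I) * f' x) = 0 := by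
        linear_combination Complex.exp ((m:ℂ) * Complex.I * x) * heq x
          - (m:ℂ)^2 * Complex.exp ((m:ℂ) * Complex.I * x) * f x * Complex.I_sq
      simp only [Pi.sub_apply] at h
      rw [hV] at h
      exact h
    have hucon : ∀ x : ℝ, Complex.exp (-(m:ℂ) * Complex.I * x) * (f' x + ((m:ℂ) * Complex.I) * f x)
        = Complex.exp (-(m:ℂ) * Complex.I * 0) * (f' 0 + ((m:ℂ) * Complex.I) * f 0) :=
      fun x => is_const_of_deriv_eq_zero (fun y => (hu y).differentiableAt) (fun y => (hu y).deriv) x 0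
    have hvcon : ∀ x : ℝ, Complex.exp ((m:ℂ) * Complex.I * x) * (f' x - ((m:ℂ) * Complex.I) * f x)
        = Complex.exp ((m:ℂ) * Complex.I * 0) * (f' 0 - ((m:ℂ) * Complex.I) * f 0) :=
      fun x => is_const_of_deriv_eq_zero (fun y => (hv y).differentiableAt) (fun y => (hv y).deriv) x 0
    have hwne : (2 * ((m:ℂ) * Complex.I)) ≠ 0 := by
      simp only [ne_eq, mul_eq_zero, OfNat.ofNat_ne_zero, Complex.I_ne_zero, or_false, false_or,
        Nat.cast_eq_zero]
      omega
    refine ⟨(f' 0 + ((m:ℂ) * Complex.I) * f 0) / (2 * ((m:ℂ) * Complex.I)), -(f' 0 - ((m:ℂ) * Complex.I) * f 0) / (2 * ((m:ℂ) * Complex.I)), fun θ => ?_⟩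
    have he : Complex.exp ((m:ℂ) * Complex.I * θ) * Complex.exp (-(m:ℂ) * Complex.I * θ) = 1 := by
      rw [← Complex.exp_add, show (m:ℂ) * Complex.I * θ + -(m:ℂ) * Complex.I * θ = 0 by ring,
        Complex.exp_zero]
    have key : Complex.exp ((m:ℂ) * Complex.I * θ) * (Complex.exp (-(m:ℂ) * Complex.I * θ) * (f' θ + ((m:ℂ) * Complex.I) * f θ))
        - Complex.exp (-(m:ℂ) * Complex.I * θ) * (Complex.exp ((m:ℂ) * Complex.I * θ) * (f' θ - ((m:ℂ) * Complex.I) * f θ))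
        = 2 * ((m:ℂ) * Complex.I) * f θ := by
      linear_combination (2 * ((m:ℂ) * Complex.I) * f θ) * he
    rw [hucon θ, hvcon θ] at key
    simp only [Complex.ofReal_zero, mul_zero, Complex.exp_zero, one_mul] at key
    rw [div_mul_eq_mul_div, div_mul_eq_mul_div, ← add_div, eq_div_iff hwne]
    linear_combination -key
  · intro a b θ

    have h1 : ∀ x : ℝ, HasDerivAt (fun x : ℝ => a * Complex.exp ((m:ℂ) * Complex.I * x)
        + b * Complex.exp (-(m:ℂ) * Complex.I * x))
        (a * ((m:ℂ) * Complex.I * Complex.exp ((m:ℂ) * Complex.I * x))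
          + b * (-(m:ℂ) * Complex.I * Complex.exp (-(m:ℂ) * Complex.I * x))) x :=
      fun x => ((hasDerivAt_cexp_mul ((m:ℂ) * Complex.I) x).const_mul a).add
        ((hasDerivAt_cexp_mul (-(m:ℂ) * Complex.I) x).const_mul b)
    have hd1 : deriv (fun x : ℝ => a * Complex.exp ((m:ℂ) * Complex.I * x)
        + b * Complex.exp (-(m:ℂ) * Complex.I * x))
        = fun x : ℝ => a * ((m:ℂ) * Complex.I * Complex.exp ((m:ℂ) * Complex.I * x))
          + b * (-(m:ℂ) * Complex.I * Complex.exp (-(m:ℂ) * Complex.I * x)) :=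
      funext fun x => (h1 x).deriv
    rw [hd1]
    have h2 : HasDerivAt (fun x : ℝ => a * ((m:ℂ) * Complex.I * Complex.exp ((m:ℂ) * Complex.I * x))
          + b * (-(m:ℂ) * Complex.I * Complex.exp (-(m:ℂ) * Complex.I * x)))
        (a * ((m:ℂ) * Complex.I * ((m:ℂ) * Complex.I * Complex.exp ((m:ℂ) * Complex.I * θ)))
          + b * (-(m:ℂ) * Complex.I * (-(m:ℂ) * Complex.I * Complex.exp (-(m:ℂ) * Complex.I * θ)))) θ :=
      (((hasDerivAt_cexp_mul ((m:ℂ) * Complex.I) θ).const_mul ((m:ℂ) * Complex.I)).const_mul a).add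
        (((hasDerivAt_cexp_mul (-(m:ℂ) * Complex.I) θ).const_mul (-(m:ℂ) * Complex.I)).const_mul b)
    rw [h2.deriv]
    linear_combination ((m:ℂ)^2 * (a * Complex.exp ((m:ℂ) * Complex.I * θ)
      + b * Complex.exp (-(m:ℂ) * Complex.I * θ))) * Complex.I_sq
  · intro c ε hε

    simp only [integrand_eq]
    rw [intervalIntegral.integral_finset_sum (fun i _ => by
      apply Continuous.intervalIntegrable
      fun_prop)]
    refine Finset.sum_eq_zero fun n hn => ?_
    have hn' : n < m := Finset.mem_range.mp hn
    rw [intervalIntegral.integral_const_mul,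
      intervalIntegral.integral_add
        ((Continuous.intervalIntegrable (by fun_prop) _ _))
        ((Continuous.intervalIntegrable (by fun_prop) _ _)),
      intervalIntegral.integral_const_mul, intervalIntegral.integral_const_mul,
      expInt_integral, expInt_integral]
    rcases hε with rfl | rfl
    · rw [if_neg (show ¬(2 * (n : ℤ) - (m : ℤ) + 1 - 1 - (m:ℤ) = 0) by omega)]
      by_cases h1 : (2 * (n : ℤ) - (m : ℤ) + 1 + 1 - (m:ℤ) = 0)
      · rw [if_pos h1]
        have hK : ((2 * (n : ℤ) - (m : ℤ) + 1 : ℤ) : ℂ) = (m:ℂ) - 1 := by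
          have h : (2 * (n : ℤ) - (m : ℤ) + 1 : ℤ) = (m:ℤ) - 1 := by omega
          rw [h]; push_cast; ring
        rw [hK]; ring
      · rw [if_neg h1]; ring
    · rw [if_neg (show ¬(2 * (n : ℤ) - (m : ℤ) + 1 + 1 - (-(m:ℤ)) = 0) by omega)]
      by_cases h2 : (2 * (n : ℤ) - (m : ℤ) + 1 - 1 - (-(m:ℤ)) = 0)
      · rw [if_pos h2]
        have hK : ((2 * (n : ℤ) - (m : ℤ) + 1 : ℤ) : ℂ) = 1 - (m:ℂ) := by
          have h : (2 * (n : ℤ) - (m : ℤ) + 1 : ℤ) = 1 - (m:ℤ) := by omega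
          rw [h]; push_cast; ring
        rw [hK]; ring
      · rw [if_neg h2]; ring
end
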